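/- arXiv:1601.02857 — 3 statements merged into one kernel-verified Lean document; each statement's English description precedes it below -/
import Mathlib

section
/- Every theorem of GLP (with sorts arbitrarily assigned to propositional variables) is a theorem of GLP*. -/
open scoped Classical

/-- Many-sorted polymodal formulas: variables carry an index and a sort `α ≤ ω`
(elements of `ℕ∞ = ℕ ∪ {ω}`). -/
inductive Formula where
  | var : ℕ → ℕ∞ → Formula
  | top : Formula
  | bot : Formula
  | and : Formula → Formula → Formula
  | or : Formula → Formula → Formula
  | neg : Formula → Formula
  | dia : ℕ → Formula → Formula
  deriving DecidableEq

namespace Formula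

def imp (φ ψ : Formula) : Formula := .or (.neg φ) ψ

def box (n : ℕ) (φ : Formula) : Formula := .neg (.dia n (.neg φ))

/-- The sort of a formula. -/
noncomputable def sort : Formula → ℕ∞
  | var _ α => α
  | top => 0
  | bot => 0
  | and φ ψ => max φ.sort ψ.sort
  | or φ ψ => max φ.sort ψ.sort
  | neg φ => φ.sort + 1
  | dia n _ => (n : ℕ∞)

def size : Formula → ℕ
  | var _ _ => 1
  | top => 1
  | bot => 1
  | and φ ψ => φ.size + ψ.size + 1
  | or φ ψ => φ.size + ψ.size + 1
  | neg φ => φ.size + 1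
  | dia _ φ => φ.size + 1

def subformulas : Formula → Finset Formula
  | var i α => {var i α}
  | top => {top}
  | bot => {bot}
  | and φ ψ => insert (and φ ψ) (φ.subformulas ∪ ψ.subformulas)
  | or φ ψ => insert (or φ ψ) (φ.subformulas ∪ ψ.subformulas)
  | neg φ => insert (neg φ) φ.subformulas
  | dia n φ => insert (dia n φ) φ.subformulas

/-- Modified negation. -/
def mneg : Formula → Formula
  | neg ψ => ψ
  | φ => neg φ

end Formula

/-- A boolean valuation treating variables and diamond formulas as atoms. -/
def IsPropValuation (v : Formula → Bool) : Prop :=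
  v .top = true ∧ v .bot = false ∧
  (∀ φ ψ, v (.and φ ψ) = (v φ && v ψ)) ∧
  (∀ φ ψ, v (.or φ ψ) = (v φ || v ψ)) ∧
  (∀ φ, v (.neg φ) = !(v φ))

/-- Classical propositional tautologies in the polymodal language. -/
def Tautology (φ : Formula) : Prop := ∀ v, IsPropValuation v → v φ = true

/-- The many-sorted logic GLP*. -/
inductive GLPStar : Formula → Prop
  | taut {φ} : Tautology φ → GLPStar φ
  | dist (n : ℕ) (φ ψ) :
      GLPStar ((Formula.dia n (φ.or ψ)).imp ((Formula.dia n φ).or (Formula.dia n ψ)))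
  | boxTop (n : ℕ) : GLPStar (Formula.box n .top)
  | loeb (n : ℕ) (φ) :
      GLPStar ((Formula.dia n φ).imp (Formula.dia n (φ.and (Formula.dia n φ.neg))))
  | mono {m n : ℕ} (φ) : m < n → GLPStar ((Formula.dia n φ).imp (Formula.dia m φ))
  | sigmaComplete {n : ℕ} {φ} : φ.sort ≤ (n : ℕ∞) → GLPStar ((Formula.dia n φ).imp φ)
  | mp {φ ψ} : GLPStar (φ.imp ψ) → GLPStar φ → GLPStar ψ
  | diaRule {φ ψ} (n : ℕ) : GLPStar (φ.imp ψ) →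
      GLPStar ((Formula.dia n φ).imp (Formula.dia n ψ))

/-- The many-sorted logic J*. -/
inductive JStar : Formula → Prop
  | taut {φ} : Tautology φ → JStar φ
  | dist (n : ℕ) (φ ψ) :
      JStar ((Formula.dia n (φ.or ψ)).imp ((Formula.dia n φ).or (Formula.dia n ψ)))
  | boxTop (n : ℕ) : JStar (Formula.box n .top)
  | loeb (n : ℕ) (φ) :
      JStar ((Formula.dia n φ).imp (Formula.dia n (φ.and (Formula.dia n φ.neg))))
  | trans {m n : ℕ} (φ) : m < n →
      JStar ((Formula.dia m (Formula.dia n φ)).imp (Formula.dia m φ))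
  | sigmaComplete {n : ℕ} {φ} : φ.sort ≤ (n : ℕ∞) → JStar ((Formula.dia n φ).imp φ)
  | mp {φ ψ} : JStar (φ.imp ψ) → JStar φ → JStar ψ
  | diaRule {φ ψ} (n : ℕ) : JStar (φ.imp ψ) →
      JStar ((Formula.dia n φ).imp (Formula.dia n ψ))

/-- Japaridze's (one-sorted) logic GLP, read over the sorted language
with sorts disregarded. -/
inductive GLP : Formula → Prop
  | taut {φ} : Tautology φ → GLP φ
  | dist (n : ℕ) (φ ψ) :
      GLP ((Formula.dia n (φ.or ψ)).imp ((Formula.dia n φ).or (Formula.dia n ψ)))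
  | boxTop (n : ℕ) : GLP (Formula.box n .top)
  | loeb (n : ℕ) (φ) :
      GLP ((Formula.dia n φ).imp (Formula.dia n (φ.and (Formula.dia n φ.neg))))
  | persist {m n : ℕ} (φ) : m < n →
      GLP ((Formula.dia m φ).imp (Formula.box n (Formula.dia m φ)))
  | mono {m n : ℕ} (φ) : m < n → GLP ((Formula.dia n φ).imp (Formula.dia m φ))
  | mp {φ ψ} : GLP (φ.imp ψ) → GLP φ → GLP ψ
  | diaRule {φ ψ} (n : ℕ) : GLP (φ.imp ψ) → GLP ((Formula.dia n φ).imp (Formula.dia n ψ))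

/-- Kripke models for the many-sorted polymodal language. -/
structure KripkeModel where
  W : Type
  R : ℕ → W → W → Prop
  val : ℕ → ℕ∞ → Set W

def KripkeModel.Sat (M : KripkeModel) : M.W → Formula → Prop
  | x, .var i α => x ∈ M.val i α
  | _, .top => True
  | _, .bot => False
  | x, .and φ ψ => M.Sat x φ ∧ M.Sat x ψ
  | x, .or φ ψ => M.Sat x φ ∨ M.Sat x ψ
  | x, .neg φ => ¬ M.Sat x φ
  | x, .dia n φ => ∃ y, M.R n x y ∧ M.Sat y φ

/-- No infinite ascending chain `x₀ R x₁ R x₂ …`. -/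
def ConverselyWellFounded {α : Type*} (R : α → α → Prop) : Prop :=
  ¬ ∃ f : ℕ → α, ∀ i, R (f i) (f (i + 1))

def IsJFrame (M : KripkeModel) : Prop :=
  (∀ k, Transitive (M.R k) ∧ ConverselyWellFounded (M.R k)) ∧
  (∀ m n : ℕ, m < n → ∀ x y, M.R n x y → ∀ z, (M.R m x z ↔ M.R m y z)) ∧
  (∀ m n : ℕ, m < n → ∀ x y z, M.R m x y → M.R n y z → M.R m x z)

def StronglyPersistent (M : KripkeModel) : Prop :=
  (∀ (i : ℕ) (α : ℕ∞) (n : ℕ) (x y : M.W),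
      α ≤ (n : ℕ∞) → M.R n x y → y ∈ M.val i α → x ∈ M.val i α) ∧
  (∀ (i : ℕ) (α : ℕ∞) (n : ℕ) (x y : M.W),
      α < (n : ℕ∞) → M.R n x y → y ∉ M.val i α → x ∉ M.val i α)

/-- Finite model: finitely many worlds and `R k = ∅` for almost all `k`. -/
def IsFiniteModel (M : KripkeModel) : Prop :=
  Finite M.W ∧ ∃ K : ℕ, ∀ k, K ≤ k → ∀ x y, ¬ M.R k x y

def IsRoot (M : KripkeModel) (r : M.W) : Prop :=
  ∀ x : M.W, r = x ∨ ∃ k, M.R k r x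

/-- `ℓ(Δ)`. -/
def ell (Δ : Set Formula) : Set ℕ := {n | ∃ φ, Formula.dia n φ ∈ Δ}

def Adequate (Δ : Set Formula) : Prop :=
  Formula.top ∈ Δ ∧
  (∀ φ ∈ Δ, ∀ ψ ∈ φ.subformulas, ψ ∈ Δ) ∧
  (∀ φ ∈ Δ, φ.mneg ∈ Δ) ∧
  (∀ (n m : ℕ) (φ ψ : Formula),
      Formula.dia n φ ∈ Δ → Formula.dia m ψ ∈ Δ → Formula.dia m φ ∈ Δ) ∧
  (∀ (i m n : ℕ), Formula.var i (m : ℕ∞) ∈ Δ → n ∈ ell Δ → m ≤ n →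
      Formula.dia n (Formula.var i (m : ℕ∞)) ∈ Δ) ∧
  (∀ (i m n : ℕ), Formula.neg (Formula.var i (m : ℕ∞)) ∈ Δ → n ∈ ell Δ → m < n →
      Formula.dia n (Formula.neg (Formula.var i (m : ℕ∞))) ∈ Δ)

def listConj : List Formula → Formula := List.foldr Formula.and Formula.top

/-- The list of all subformulas of the form `⟨n⟩ψ` (as pairs `(n, ψ)`). -/
def diaSubsList : Formula → List (ℕ × Formula)
  | .and φ ψ => diaSubsList φ ++ diaSubsList ψ
  | .or φ ψ => diaSubsList φ ++ diaSubsList ψ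
  | .neg φ => diaSubsList φ
  | .dia n φ => (n, φ) :: diaSubsList φ
  | _ => []

/-- `n = max_i m_i`, the largest modality occurring in `φ`. -/
def maxMod (φ : Formula) : ℕ := ((diaSubsList φ).map Prod.fst).foldr max 0

/-- `M(φ)`. -/
def Mformula (φ : Formula) : Formula :=
  listConj ((diaSubsList φ).map (fun p =>
    listConj (((List.range (maxMod φ + 1)).filter (fun j => decide (p.1 < j))).map
      (fun j => (Formula.dia j p.2).imp (Formula.dia p.1 p.2)))))

/-- `M⁺(φ) = M(φ) ∧ ⋀_{i ≤ n} [i]M(φ)`. -/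
def Mplus (φ : Formula) : Formula :=
  (Mformula φ).and
    (listConj ((List.range (maxMod φ + 1)).map (fun i => Formula.box i (Mformula φ))))

/-- The diamond subformulas sorted so that the modalities are nondecreasing. -/
def sortedDiaSubs (φ : Formula) : List (ℕ × Formula) :=
  (diaSubsList φ).mergeSort (fun a b => Nat.ble a.1 b.1)

def Npairs : List (ℕ × Formula) → List Formula
  | [] => []
  | p :: rest =>
      rest.map (fun q => (Formula.dia q.1 q.2).imp (Formula.dia p.1 p.2)) ++ Npairs rest

/-- `N(φ)`. -/
def Nformula (φ : Formula) : Formula := listConj (Npairs (sortedDiaSubs φ))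

/-- `N⁺(φ) = N(φ) ∧ ⋀_{1≤i≤s} [m_i]N(φ)`. -/
def Nplus (φ : Formula) : Formula :=
  (Nformula φ).and
    (listConj ((sortedDiaSubs φ).map (fun p => Formula.box p.1 (Nformula φ))))

/-- The list of modalities occurring in `φ`. -/
def modList (φ : Formula) : List ℕ := ((diaSubsList φ).map Prod.fst).dedup

def varsList : Formula → List (ℕ × ℕ∞)
  | .var i α => [(i, α)]
  | .and φ ψ => varsList φ ++ varsList ψ
  | .or φ ψ => varsList φ ++ varsList ψ
  | .neg φ => varsList φ
  | .dia _ φ => varsList φ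
  | _ => []

/-- The set of (sorted) propositional variables occurring in `φ`. -/
def varsOf (φ : Formula) : Finset (ℕ × ℕ∞) := (varsList φ).toFinset

/-- `R_Θ(φ)` with `Θ` the set of modalities of `φ`. -/
def Rtheta (φ : Formula) : Formula :=
  listConj ((varsList φ).map (fun v =>
    Formula.and
      (listConj (((modList φ).filter (fun (j : ℕ) => decide (v.2 ≤ (j : ℕ∞)))).map
        (fun j => (Formula.dia j (Formula.var v.1 v.2)).imp (Formula.var v.1 v.2))))
      (listConj (((modList φ).filter (fun (j : ℕ) => decide (v.2 < (j : ℕ∞)))).map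
        (fun j => (Formula.dia j (Formula.neg (Formula.var v.1 v.2))).imp
          (Formula.neg (Formula.var v.1 v.2)))))))

/-- `R⁺_Θ(φ) = R_Θ(φ) ∧ ⋀_{j ∈ Θ} [j]R_Θ(φ)`. -/
def Rplus (φ : Formula) : Formula :=
  (Rtheta φ).and (listConj ((modList φ).map (fun j => Formula.box j (Rtheta φ))))

/-- Reassign sort `ω` to every propositional variable. -/
def toOmega : Formula → Formula
  | .var i _ => .var i ⊤
  | .top => .top
  | .bot => .bot
  | .and φ ψ => .and (toOmega φ) (toOmega ψ)
  | .or φ ψ => .or (toOmega φ) (toOmega ψ)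
  | .neg φ => .neg (toOmega φ)
  | .dia n φ => .dia n (toOmega φ)

/-- `H(φ) = ⋀_i (φ_i → ⟨n_i⟩φ_i)`. -/
def Hformula (φ : Formula) : Formula :=
  listConj ((diaSubsList φ).map (fun p => Formula.imp p.2 (Formula.dia p.1 p.2)))

/-- The truth provability logic GLPS*. -/
inductive GLPSStar : Formula → Prop
  | glp {φ} : GLPStar φ → GLPSStar φ
  | refl (n : ℕ) (φ : Formula) : GLPSStar (φ.imp (Formula.dia n φ))
  | mp {φ ψ} : GLPSStar (φ.imp ψ) → GLPSStar φ → GLPSStar ψ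

theorem Tautology.imp_neg_comm (φ ψ : Formula) :
    Tautology ((φ.imp ψ.neg).imp (ψ.imp φ.neg)) := by
  rintro v ⟨-, -, -, hor, hneg⟩
  simp only [Formula.imp, hor, hneg]
  cases v φ <;> cases v ψ <;> rfl

theorem GLPStar.imp_neg_comm {φ ψ : Formula} (h : GLPStar (φ.imp ψ.neg)) :
    GLPStar (ψ.imp φ.neg) :=
  .mp (.taut (Tautology.imp_neg_comm φ ψ)) h

theorem Formula.sort_neg_dia (m : ℕ) (φ : Formula) : (neg (dia m φ)).sort = (m + 1 : ℕ) := by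
  simp [sort]

-- `[n]⟨m⟩φ` is `¬⟨n⟩¬⟨m⟩φ`: this is the contrapositive of Σ-completeness for `¬⟨m⟩φ`,
-- whose sort is `m + 1 ≤ n`.
theorem GLPStar.persist {m n : ℕ} (φ : Formula) (h : m < n) :
    GLPStar ((Formula.dia m φ).imp (Formula.box n (Formula.dia m φ))) :=
  imp_neg_comm (sigmaComplete (by rw [Formula.sort_neg_dia]; exact_mod_cast h))

/-- every theorem of GLP (with sorts arbitrarily assigned to the
propositional variables) is a theorem of GLP*. -/
theorem GLPStar_extends_GLP (φ : Formula) : GLP φ → GLPStar φ := by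
  intro h
  induction h with
  | taut h => exact .taut h
  | dist n φ ψ => exact .dist n φ ψ
  | boxTop n => exact .boxTop n
  | loeb n φ => exact .loeb n φ
  | persist φ h => exact .persist φ h
  | mono φ h => exact .mono φ h
  | mp _ _ ih₁ ih₂ => exact .mp ih₁ ih₂
  | diaRule n _ ih => exact .diaRule n ih
end

section
/- A J*-model A is strongly persistent (the persistence conditions hold for propositional variables) if and only if for all formulas φ and all n: (i) if sort(φ) ≤ n, x R_n y and y ⊩ φ, then x ⊩ φ; and (ii) if sort(φ) < n, x R_n y and y ⊮ φ, then x ⊮ φ. -/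
open scoped Classical

/-!
Induction on the formula. Negation exchanges the two persistence clauses, which matches
`sort (¬φ) = sort φ + 1` turning `≤ n` into `< n`. For `⟨m⟩φ`, of sort `m`: if `m ≤ n` then
`x R_n y R_m z` gives `x R_m z` (by transitivity when `m = n`, by the J-frame condition when
`m < n`); if `m < n` then `x` and `y` have the same `R_m`-successors, so `⟨m⟩φ` fails at `x`
whenever it fails at `y`.
-/

namespace Formula

theorem sort_le_sort_neg (φ : Formula) : φ.sort ≤ φ.neg.sort :=
  le_self_add

theorem sort_lt_of_sort_neg_le {φ : Formula} {n : ℕ} (h : φ.neg.sort ≤ n) : φ.sort < n :=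
  (ENat.add_one_le_iff' (ENat.natCast_ne_top n)).1 h

end Formula

namespace KripkeModel

variable (M : KripkeModel)

def IsPersistent (φ : Formula) : Prop :=
  ∀ (n : ℕ) (x y : M.W), M.R n x y →
    ((φ.sort ≤ (n : ℕ∞) → M.Sat y φ → M.Sat x φ) ∧
     (φ.sort < (n : ℕ∞) → ¬ M.Sat y φ → ¬ M.Sat x φ))

variable {M}

theorem stronglyPersistent_iff_isPersistent_var :
    StronglyPersistent M ↔ ∀ i α, M.IsPersistent (.var i α) := by
  constructor
  · rintro ⟨hpos, hneg⟩ i α n x y hR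
    exact ⟨fun hs => hpos i α n x y hs hR, fun hs => hneg i α n x y hs hR⟩
  · intro h
    exact ⟨fun i α n x y hs hR => (h i α n x y hR).1 hs,
      fun i α n x y hs hR => (h i α n x y hR).2 hs⟩

theorem isPersistent_top : M.IsPersistent .top :=
  fun _ _ _ _ => ⟨fun _ _ => trivial, fun _ h => absurd trivial h⟩

theorem isPersistent_bot : M.IsPersistent .bot :=
  fun _ _ _ _ => ⟨fun _ h => h, fun _ _ h => h⟩

theorem IsPersistent.and {φ ψ : Formula} (hφ : M.IsPersistent φ) (hψ : M.IsPersistent ψ) :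
    M.IsPersistent (φ.and ψ) := by
  intro n x y hR
  have hφ := hφ n x y hR
  have hψ := hψ n x y hR
  simp only [Formula.sort, max_le_iff, max_lt_iff, Sat, not_and_or]
  exact ⟨fun hs h => ⟨hφ.1 hs.1 h.1, hψ.1 hs.2 h.2⟩,
    fun hs => Or.imp (hφ.2 hs.1) (hψ.2 hs.2)⟩

theorem IsPersistent.or {φ ψ : Formula} (hφ : M.IsPersistent φ) (hψ : M.IsPersistent ψ) :
    M.IsPersistent (φ.or ψ) := by
  intro n x y hR
  have hφ := hφ n x y hR
  have hψ := hψ n x y hR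
  simp only [Formula.sort, max_le_iff, max_lt_iff, Sat, not_or]
  exact ⟨fun hs => Or.imp (hφ.1 hs.1) (hψ.1 hs.2),
    fun hs h => ⟨hφ.2 hs.1 h.1, hψ.2 hs.2 h.2⟩⟩

theorem IsPersistent.neg {φ : Formula} (hφ : M.IsPersistent φ) : M.IsPersistent φ.neg := by
  intro n x y hR
  refine ⟨fun hs => (hφ n x y hR).2 (Formula.sort_lt_of_sort_neg_le hs), fun hs hy => ?_⟩
  simp only [Sat, not_not] at hy ⊢
  exact (hφ n x y hR).1 ((φ.sort_le_sort_neg).trans hs.le) hy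

theorem isPersistent_dia {m : ℕ} (φ : Formula)
    (hup : ∀ n x y z, m ≤ n → M.R n x y → M.R m y z → M.R m x z)
    (hdown : ∀ n x y z, m < n → M.R n x y → M.R m x z → M.R m y z) :
    M.IsPersistent (.dia m φ) := by
  intro n x y hR
  simp only [Formula.sort, Nat.cast_le, Nat.cast_lt]
  refine ⟨fun hmn ⟨z, hyz, hz⟩ => ⟨z, hup n x y z hmn hR hyz, hz⟩, ?_⟩
  rintro hmn hy ⟨z, hxz, hz⟩
  exact hy ⟨z, hdown n x y z hmn hR hxz, hz⟩

end KripkeModel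

namespace IsJFrame

variable {M : KripkeModel}

theorem rel_of_rel_of_le (hJ : IsJFrame M) {m n : ℕ} {x y z : M.W}
    (hmn : m ≤ n) (hxy : M.R n x y) (hyz : M.R m y z) : M.R m x z := by
  rcases hmn.lt_or_eq with hmn | rfl
  · exact (hJ.2.1 m n hmn x y hxy z).2 hyz
  · exact (hJ.1 m).1 hxy hyz

theorem rel_of_rel_of_lt (hJ : IsJFrame M) {m n : ℕ} {x y z : M.W}
    (hmn : m < n) (hxy : M.R n x y) (hxz : M.R m x z) : M.R m y z :=
  (hJ.2.1 m n hmn x y hxy z).1 hxz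

theorem isPersistent_of_stronglyPersistent (hJ : IsJFrame M) (hM : StronglyPersistent M)
    (φ : Formula) : M.IsPersistent φ := by
  induction φ with
  | var i α => exact KripkeModel.stronglyPersistent_iff_isPersistent_var.1 hM i α
  | top => exact KripkeModel.isPersistent_top
  | bot => exact KripkeModel.isPersistent_bot
  | and φ ψ hφ hψ => exact hφ.and hψ
  | or φ ψ hφ hψ => exact hφ.or hψ
  | neg φ hφ => exact hφ.neg
  | dia m φ =>
    exact KripkeModel.isPersistent_dia φ
      (fun _ _ _ _ => hJ.rel_of_rel_of_le) (fun _ _ _ _ => hJ.rel_of_rel_of_lt)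

end IsJFrame

/-- a J*-model is strongly persistent iff persistence holds for
all formulas. -/
theorem stronglyPersistent_iff (M : KripkeModel) (hJ : IsJFrame M) :
    StronglyPersistent M ↔
      ∀ (φ : Formula) (n : ℕ) (x y : M.W), M.R n x y →
        ((φ.sort ≤ (n : ℕ∞) → M.Sat y φ → M.Sat x φ) ∧
         (φ.sort < (n : ℕ∞) → ¬ M.Sat y φ → ¬ M.Sat x φ)) :=
  ⟨hJ.isPersistent_of_stronglyPersistent,
    fun h => KripkeModel.stronglyPersistent_iff_isPersistent_var.2 fun i α => h (.var i α)⟩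
end

section
/- The axiom scheme ⟨n⟩φ → φ (for all φ with sort(φ) ≤ n and all n) is valid in a J*-model A if and only if A is strongly persistent. -/
open scoped Classical

/-! Instantiating the scheme at `p` of sort `α ≤ n` and at `¬p` with `α < n` gives exactly the two
clauses of strong persistence. Conversely, strong persistence propagates from variables to all
formulas along `R n`: truth of a formula of sort `≤ n` passes from `y` back to `x`, and truth of a
formula of sort `< n` is the same at `x` and `y`. The case `¬φ` switches between the two
statements, and in the case `⟨m⟩φ` with `m ≤ n` one uses transitivity of `R n` for `m = n` and the
`R n`-invariance of `R m`-successors for `m < n`. -/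

namespace Formula

theorem sort_neg_le_natCast_iff (φ : Formula) (n : ℕ) :
    (neg φ).sort ≤ (n : ℕ∞) ↔ φ.sort < (n : ℕ∞) :=
  ENat.add_one_le_natCast_iff

end Formula

theorem KripkeModel.sat_imp (M : KripkeModel) {x : M.W} {φ ψ : Formula} :
    M.Sat x (φ.imp ψ) ↔ (M.Sat x φ → M.Sat x ψ) := by
  simp only [Formula.imp, Sat, imp_iff_not_or]

theorem StronglyPersistent.sat_transfer {M : KripkeModel} (hSP : StronglyPersistent M)
    (htrans : ∀ n ⦃x y z⦄, M.R n x y → M.R n y z → M.R n x z)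
    (hinv : ∀ m n : ℕ, m < n → ∀ x y, M.R n x y → ∀ z, (M.R m x z ↔ M.R m y z))
    (φ : Formula) {n : ℕ} {x y : M.W} (hR : M.R n x y) :
    (φ.sort ≤ (n : ℕ∞) → M.Sat y φ → M.Sat x φ) ∧
      (φ.sort < (n : ℕ∞) → M.Sat x φ → M.Sat y φ) := by
  induction φ with
  | var i α =>
    exact ⟨fun hle => hSP.1 i α n x y hle hR, fun hlt => not_imp_not.1 (hSP.2 i α n x y hlt hR)⟩
  | top => exact ⟨fun _ _ => trivial, fun _ _ => trivial⟩
  | bot => exact ⟨fun _ => id, fun _ => id⟩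
  | and φ ψ ihφ ihψ =>
    simp only [Formula.sort, max_le_iff, max_lt_iff, KripkeModel.Sat]
    exact ⟨fun h hy => ⟨ihφ.1 h.1 hy.1, ihψ.1 h.2 hy.2⟩,
      fun h hx => ⟨ihφ.2 h.1 hx.1, ihψ.2 h.2 hx.2⟩⟩
  | or φ ψ ihφ ihψ =>
    simp only [Formula.sort, max_le_iff, max_lt_iff, KripkeModel.Sat]
    exact ⟨fun h => Or.imp (ihφ.1 h.1) (ihψ.1 h.2), fun h => Or.imp (ihφ.2 h.1) (ihψ.2 h.2)⟩
  | neg φ ih =>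
    rw [Formula.sort_neg_le_natCast_iff]
    exact ⟨fun hlt => mt (ih.2 hlt), fun hlt => mt (ih.1 (le_self_add.trans_lt hlt).le)⟩
  | dia m φ =>
    simp only [Formula.sort, Nat.cast_le, Nat.cast_lt, KripkeModel.Sat]
    refine ⟨fun hmn => ?_, fun hmn => ?_⟩
    · rintro ⟨z, hyz, hz⟩
      rcases hmn.lt_or_eq with hmn | rfl
      · exact ⟨z, (hinv m n hmn x y hR z).2 hyz, hz⟩
      · exact ⟨z, htrans m hR hyz, hz⟩
    · rintro ⟨z, hxz, hz⟩
      exact ⟨z, (hinv m n hmn x y hR z).1 hxz, hz⟩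

/-- the scheme ⟨n⟩φ → φ (for sort φ ≤ n) is valid in a J*-model
iff the model is strongly persistent. -/
theorem sigmaComplete_valid_iff_stronglyPersistent (M : KripkeModel) (hJ : IsJFrame M) :
    (∀ (n : ℕ) (φ : Formula), φ.sort ≤ (n : ℕ∞) →
        ∀ x : M.W, M.Sat x ((Formula.dia n φ).imp φ)) ↔
      StronglyPersistent M := by
  constructor
  · intro hvalid
    refine ⟨fun i α n x y hle hR hy => ?_, fun i α n x y hlt hR hy => ?_⟩
    · exact M.sat_imp.1 (hvalid n (.var i α) hle x) ⟨y, hR, hy⟩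
    · have hsort := (Formula.sort_neg_le_natCast_iff (.var i α) n).2 hlt
      exact M.sat_imp.1 (hvalid n _ hsort x) ⟨y, hR, hy⟩
  · intro hSP n φ hle x
    refine M.sat_imp.2 fun ⟨y, hR, hy⟩ => ?_
    exact (hSP.sat_transfer (fun k => (hJ.1 k).1) hJ.2.1 φ hR).1 hle hy
end
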